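/- Let Y₁, …, Yₙ be independent and uniformly distributed on the unit square [0,1]². Let 𝓛 be the set of indices i ∈ {1,…,n} such that there exists α ∈ ℝ² with α₁ ≥ 0, α₂ ≥ 0, α ≠ 0, for which Y_i minimizes the linear functional y ↦ α₁y₁ + α₂y₂ over {Y₁,…,Yₙ}. Then there is a constant C > 0 such that for all n ≥ 2, E|𝓛| ≥ (1/2) ln n − C. -/

import Mathlib

/-!
If `p = Y i` lies in the open quadrant and every other sample lies in the half-plane above the
tangent line at `p` to the hyperbola `y₁ y₂ = p₁ p₂`, then `p` minimizes
`y ↦ p₂ y₁ + p₁ y₂`. Inside the unit square the complement of that half-plane is contained in a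
triangle of area `2 p₁ p₂`, so by independence this event has probability at least
`∫∫ (1 - 2ab)ⁿ⁻¹ da db` over `(0, 1/2] × (0, 1]`, which is at least `log (n + 1) / (2n)`.
Summing over the `n` indices gives `E|𝓛| ≥ (1/2) log (n + 1)`.
-/

open MeasureTheory ProbabilityTheory Set Real

namespace Scalarization

variable {ι : Type*}

def IsLinearScalarizationMin (x : ι → ℝ × ℝ) (i : ι) : Prop :=
  ∃ α : ℝ × ℝ, 0 ≤ α.1 ∧ 0 ≤ α.2 ∧ α ≠ 0 ∧ ∀ j,
    α.1 * (x i).1 + α.2 * (x i).2 ≤ α.1 * (x j).1 + α.2 * (x j).2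

lemma isLinearScalarizationMin_iff_exists_mem_Icc (x : ι → ℝ × ℝ) (i : ι) :
    IsLinearScalarizationMin x i ↔ ∃ s ∈ Icc (0 : ℝ) 1, ∀ j,
      (1 - s) * (x i).1 + s * (x i).2 ≤ (1 - s) * (x j).1 + s * (x j).2 := by
  constructor
  · rintro ⟨α, h₁, h₂, hα, hmin⟩
    have hσ : 0 < α.1 + α.2 := by
      rcases h₁.lt_or_eq with h | h
      · linarith
      rcases h₂.lt_or_eq with h' | h'
      · linarith
      exact absurd (Prod.ext h.symm h'.symm) hα
    refine ⟨α.2 / (α.1 + α.2), ⟨by positivity, (div_le_one hσ).2 (by linarith)⟩, fun j => ?_⟩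
    have hs : 1 - α.2 / (α.1 + α.2) = α.1 / (α.1 + α.2) := by field_simp; ring
    have hdiv : ∀ y : ℝ × ℝ, α.1 / (α.1 + α.2) * y.1 + α.2 / (α.1 + α.2) * y.2
        = (α.1 * y.1 + α.2 * y.2) / (α.1 + α.2) := fun y => by ring
    rw [hs, hdiv, hdiv]
    exact div_le_div_of_nonneg_right (hmin j) hσ.le
  · rintro ⟨s, ⟨hs₀, hs₁⟩, hmin⟩
    refine ⟨(1 - s, s), sub_nonneg.2 hs₁, hs₀, fun h => ?_, hmin⟩
    have := congrArg (fun α : ℝ × ℝ => α.1 + α.2) h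
    norm_num at this

lemma isClosed_setOf_isLinearScalarizationMin (i : ι) :
    IsClosed {x : ι → ℝ × ℝ | IsLinearScalarizationMin x i} := by
  have hC : IsClosed {z : Icc (0 : ℝ) 1 × (ι → ℝ × ℝ) | ∀ j,
      (1 - z.1) * (z.2 i).1 + z.1 * (z.2 i).2 ≤ (1 - z.1) * (z.2 j).1 + z.1 * (z.2 j).2} :=
    ofPred_forall _ ▸ isClosed_iInter fun j => isClosed_le (by fun_prop) (by fun_prop)
  convert isClosedMap_snd_of_compactSpace _ hC using 1
  ext x
  simp [isLinearScalarizationMin_iff_exists_mem_Icc]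

/-- The closed half-plane above the tangent line at `p` to the hyperbola `y₁ y₂ = p₁ p₂`;
its inner normal is `p.swap`. -/
def tangentHalfPlane (p : ℝ × ℝ) : Set (ℝ × ℝ) :=
  {q | p.2 * p.1 + p.1 * p.2 ≤ p.2 * q.1 + p.1 * q.2}

lemma measurableSet_setOf_mem_tangentHalfPlane :
    MeasurableSet {z : (ℝ × ℝ) × (ℝ × ℝ) | z.2 ∈ tangentHalfPlane z.1} :=
  measurableSet_le (f := fun z : (ℝ × ℝ) × (ℝ × ℝ) => z.1.2 * z.1.1 + z.1.1 * z.1.2)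
    (g := fun z : (ℝ × ℝ) × (ℝ × ℝ) => z.1.2 * z.2.1 + z.1.1 * z.2.2) (by fun_prop) (by fun_prop)

lemma isLinearScalarizationMin_of_forall_ne_mem_tangentHalfPlane {x : ι → ℝ × ℝ} {i : ι}
    (h₁ : 0 < (x i).1) (h₂ : 0 ≤ (x i).2) (h : ∀ j ≠ i, x j ∈ tangentHalfPlane (x i)) :
    IsLinearScalarizationMin x i := by
  refine ⟨(x i).swap, h₂, h₁.le, fun h0 => h₁.ne' (congrArg Prod.snd h0), fun j => ?_⟩
  rcases eq_or_ne j i with rfl | hj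
  · exact le_rfl
  · exact h j hj

lemma measurableSet_tangentHalfPlane (p : ℝ × ℝ) : MeasurableSet (tangentHalfPlane p) :=
  measurableSet_le measurable_const (by fun_prop)

lemma volume_regionBetween_triangle {a b : ℝ} (ha : 0 < a) (hb : 0 < b) :
    volume (regionBetween (fun _ => 0) (fun x => 2 * b - b / a * x) (Icc 0 (2 * a)))
      = ENNReal.ofReal (2 * a * b) := by
  rw [Measure.volume_eq_prod, volume_regionBetween_eq_integral
    (integrableOn_const measure_Icc_lt_top.ne)
    (by fun_prop : Continuous fun x => 2 * b - b / a * x).integrableOn_Icc measurableSet_Icc,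
    integral_Icc_eq_integral_Ioc, ← intervalIntegral.integral_of_le (by positivity)]
  · congr 1
    simp only [Pi.sub_apply, sub_zero]
    rw [intervalIntegral.integral_sub intervalIntegrable_const
      ((by fun_prop : Continuous fun x => b / a * x).intervalIntegrable _ _),
      intervalIntegral.integral_const, intervalIntegral.integral_const_mul, integral_id]
    field_simp
    ring
  · intro x hx
    have : b / a * x ≤ b / a * (2 * a) := mul_le_mul_of_nonneg_left hx.2 (by positivity)
    rw [show b / a * (2 * a) = 2 * b by field_simp] at this
    linarith

lemma volume_quadrant_diff_tangentHalfPlane_le {a b : ℝ} (ha : 0 < a) (hb : 0 < b) :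
    volume ((Ici 0 ×ˢ Ici 0) \ tangentHalfPlane (a, b)) ≤ ENNReal.ofReal (2 * a * b) := by
  -- `regionBetween` is open at the bottom, so the axis `y = 0` is added as a null set
  have hsub : (Ici 0 ×ˢ Ici 0) \ tangentHalfPlane (a, b) ⊆
      regionBetween (fun _ => 0) (fun x => 2 * b - b / a * x) (Icc 0 (2 * a)) ∪ univ ×ˢ {0} := by
    rintro ⟨x, y⟩ ⟨⟨hx, hy⟩, hxy⟩
    simp only [tangentHalfPlane, mem_ofPred_eq, not_le] at hxy
    simp only [mem_Ici] at hx hy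
    rcases hy.eq_or_lt with rfl | hy
    · exact Or.inr ⟨mem_univ _, rfl⟩
    refine Or.inl ⟨⟨hx, by nlinarith⟩, hy, ?_⟩
    show y < 2 * b - b / a * x
    rw [div_mul_eq_mul_div, lt_sub_comm, div_lt_iff₀ ha]
    linarith
  have hline : volume ((univ : Set ℝ) ×ˢ ({0} : Set ℝ)) = 0 := by
    rw [Measure.volume_eq_prod, Measure.prod_prod, Real.volume_singleton, mul_zero]
  calc volume ((Ici 0 ×ˢ Ici 0) \ tangentHalfPlane (a, b))
      ≤ volume (regionBetween (fun _ => 0) (fun x => 2 * b - b / a * x) (Icc 0 (2 * a))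
          ∪ univ ×ˢ {0}) := measure_mono hsub
    _ ≤ _ := measure_union_le _ _
    _ = ENNReal.ofReal (2 * a * b) := by rw [hline, add_zero, volume_regionBetween_triangle ha hb]

abbrev unitSquare : Set (ℝ × ℝ) := Icc 0 1 ×ˢ Icc 0 1

lemma volume_unitSquare : volume unitSquare = 1 := by
  rw [Measure.volume_eq_prod, Measure.prod_prod, Real.volume_Icc]
  norm_num

lemma ofReal_one_sub_le_volume_unitSquare_tangentHalfPlane {a b : ℝ} (ha : 0 < a) (hb : 0 < b) :
    ENNReal.ofReal (1 - 2 * a * b) ≤ volume.restrict unitSquare (tangentHalfPlane (a, b)) := by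
  have hsplit :=
    measure_inter_add_sdiff (μ := volume) unitSquare (measurableSet_tangentHalfPlane (a, b))
  have hdiff : volume (unitSquare \ tangentHalfPlane (a, b)) ≤ ENNReal.ofReal (2 * a * b) :=
    (measure_mono (sdiff_subset_sdiff_left (prod_mono Icc_subset_Ici_self Icc_subset_Ici_self))
      ).trans (volume_quadrant_diff_tangentHalfPlane_le ha hb)
  rw [ENNReal.ofReal_sub _ (by positivity), ENNReal.ofReal_one, tsub_le_iff_right,
    Measure.restrict_apply (measurableSet_tangentHalfPlane _), inter_comm, ← volume_unitSquare,
    ← hsplit]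
  gcongr

lemma one_div_one_add_mul_le_integral_one_sub_mul_pow (m : ℕ) {c : ℝ} (hc₀ : 0 < c)
    (hc₁ : c ≤ 1) :
    1 / (1 + c * (m + 1)) ≤ ∫ b in (0 : ℝ)..1, (1 - c * b) ^ m := by
  rw [intervalIntegral.integral_comp_sub_mul (fun u => u ^ m) hc₀.ne', integral_pow]
  have hbernoulli : 1 + (m + 1) * c ≤ (1 + c) ^ (m + 1) := by
    simpa using one_add_mul_le_pow (by linarith : (-2 : ℝ) ≤ c) (m + 1)
  have hprod : (1 - c) ^ (m + 1) * (1 + c) ^ (m + 1) ≤ 1 := by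
    rw [← mul_pow]
    exact pow_le_one₀ (by nlinarith) (by nlinarith)
  have hpow : 0 ≤ (1 - c) ^ (m + 1) := pow_nonneg (by linarith) _
  rw [smul_eq_mul, mul_one, mul_zero, sub_zero, one_pow, ← div_eq_inv_mul, div_div,
    div_le_div_iff₀ (by positivity) (by positivity)]
  nlinarith

lemma integral_one_div_one_add_mul (k : ℝ) (hk : 0 < k) :
    ∫ a in (0 : ℝ)..(1 / 2), 1 / (1 + 2 * k * a) = log (1 + k) / (2 * k) := by
  simp only [one_div]
  rw [intervalIntegral.integral_comp_add_mul (fun u => u⁻¹) (by positivity), integral_inv]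
  · simp only [mul_zero, add_zero, smul_eq_mul, div_one]
    rw [show 1 + 2 * k * 2⁻¹ = 1 + k by ring]
    field_simp
  · rw [uIcc_of_le (by nlinarith)]
    simp

lemma ofReal_log_div_le_setLIntegral_one_sub_mul_pow (m : ℕ) :
    ENNReal.ofReal (log (m + 2) / (2 * (m + 1))) ≤
      ∫⁻ p in Ioc (0 : ℝ) (1 / 2) ×ˢ Ioc (0 : ℝ) 1, ENNReal.ofReal ((1 - 2 * p.1 * p.2) ^ m) := by
  rw [Measure.volume_eq_prod, setLIntegral_prod _ (by fun_prop)]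
  have hinner : ∀ a ∈ Ioc (0 : ℝ) (1 / 2), ENNReal.ofReal (1 / (1 + 2 * (m + 1) * a)) ≤
      ∫⁻ b in Ioc (0 : ℝ) 1, ENNReal.ofReal ((1 - 2 * a * b) ^ m) := by
    intro a ⟨ha₀, ha₁⟩
    rw [← ofReal_integral_eq_lintegral_ofReal
      (by fun_prop : Continuous fun b : ℝ => (1 - 2 * a * b) ^ m).integrableOn_Ioc]
    · rw [← intervalIntegral.integral_of_le zero_le_one]
      refine ENNReal.ofReal_le_ofReal (le_of_eq_of_le ?_
        (one_div_one_add_mul_le_integral_one_sub_mul_pow m (c := 2 * a) (by positivity)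
          (by linarith)))
      ring_nf
    · filter_upwards [ae_restrict_mem measurableSet_Ioc] with b ⟨hb₀, hb₁⟩
      exact pow_nonneg (by nlinarith) m
  calc ENNReal.ofReal (log (m + 2) / (2 * (m + 1)))
      = ENNReal.ofReal (∫ a in Ioc (0 : ℝ) (1 / 2), 1 / (1 + 2 * (m + 1) * a)) := by
        rw [← intervalIntegral.integral_of_le (by norm_num),
          integral_one_div_one_add_mul _ (by positivity)]
        ring_nf
    _ = ∫⁻ a in Ioc (0 : ℝ) (1 / 2), ENNReal.ofReal (1 / (1 + 2 * (m + 1) * a)) := by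
        refine ofReal_integral_eq_lintegral_ofReal ?_ ?_
        · refine (ContinuousOn.integrableOn_Icc ?_).mono_set Ioc_subset_Icc_self
          exact continuousOn_const.div (by fun_prop) fun a ha => by nlinarith [ha.1]
        · filter_upwards [ae_restrict_mem measurableSet_Ioc] with a ha
          have := ha.1
          positivity
    _ ≤ _ := setLIntegral_mono' measurableSet_Ioc hinner

lemma ofReal_log_div_le_lintegral_tangentHalfPlane_pow (m : ℕ) :
    ENNReal.ofReal (log (m + 2) / (2 * (m + 1))) ≤
      ∫⁻ p in Ioc (0 : ℝ) (1 / 2) ×ˢ Ioc (0 : ℝ) 1,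
        volume.restrict unitSquare (tangentHalfPlane p) ^ m ∂volume.restrict unitSquare := by
  have hD : MeasurableSet (Ioc (0 : ℝ) (1 / 2) ×ˢ Ioc (0 : ℝ) 1) :=
    measurableSet_Ioc.prod measurableSet_Ioc
  have hDsub : Ioc (0 : ℝ) (1 / 2) ×ˢ Ioc (0 : ℝ) 1 ⊆ unitSquare :=
    prod_mono (Ioc_subset_Icc_self.trans (Icc_subset_Icc_right (by norm_num))) Ioc_subset_Icc_self
  rw [Measure.restrict_restrict hD, inter_eq_left.2 hDsub]
  refine (ofReal_log_div_le_setLIntegral_one_sub_mul_pow m).trans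
    (setLIntegral_mono' hD fun p ⟨ha, hb⟩ => ?_)
  rw [ENNReal.ofReal_pow (by nlinarith [ha.1, ha.2, hb.1, hb.2])]
  exact pow_le_pow_left' (ofReal_one_sub_le_volume_unitSquare_tangentHalfPlane ha.1 hb.1) m

variable {α : Type*} [MeasurableSpace α] {m : ℕ} {G : Set α} {S : α → Set α}

lemma measurableSet_setOf_forall_ne_mem (i : Fin (m + 1)) (hG : MeasurableSet G)
    (hS : MeasurableSet {z : α × α | z.2 ∈ S z.1}) :
    MeasurableSet {x : Fin (m + 1) → α | x i ∈ G ∧ ∀ j ≠ i, x j ∈ S (x i)} := by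
  simp only [ofPred_and, ofPred_forall]
  exact (measurable_pi_apply i hG).inter <| .iInter fun j => .iInter fun _ =>
    hS.preimage (f := fun x : Fin (m + 1) → α => (x i, x j)) (by fun_prop)

lemma measure_pi_setOf_forall_ne_mem (μ : Measure α) [SigmaFinite μ] (i : Fin (m + 1))
    (hG : MeasurableSet G) (hS : MeasurableSet {z : α × α | z.2 ∈ S z.1}) :
    Measure.pi (fun _ => μ) {x : Fin (m + 1) → α | x i ∈ G ∧ ∀ j ≠ i, x j ∈ S (x i)}
      = ∫⁻ p in G, μ (S p) ^ m ∂μ := by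
  set T : Set (α × (Fin m → α)) := {z | z.1 ∈ G ∧ ∀ k, z.2 k ∈ S z.1}
  have hT : MeasurableSet T := by
    simp only [T, ofPred_and, ofPred_forall]
    exact (measurable_fst hG).inter <| .iInter fun k =>
      hS.preimage (measurable_fst.prodMk ((measurable_pi_apply k).comp measurable_snd))
  have hpre : {x : Fin (m + 1) → α | x i ∈ G ∧ ∀ j ≠ i, x j ∈ S (x i)}
      = MeasurableEquiv.piFinSuccAbove (fun _ => α) i ⁻¹' T := by
    ext x
    simp only [T, mem_ofPred_eq, mem_preimage, MeasurableEquiv.piFinSuccAbove_apply,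
      Fin.insertNthEquiv_symm_apply, Fin.removeNth]
    refine and_congr_right fun _ => ⟨fun h k => h _ (Fin.succAbove_ne i k), fun h j hj => ?_⟩
    obtain ⟨k, rfl⟩ := Fin.exists_succAbove_eq hj
    exact h k
  have hsection : ∀ p, Measure.pi (fun _ => μ) (Prod.mk p ⁻¹' T)
      = G.indicator (fun p => μ (S p) ^ m) p := by
    intro p
    by_cases hp : p ∈ G
    · have : Prod.mk p ⁻¹' T = univ.pi fun _ => S p := by ext; simp [T, hp]
      simp [this, hp]
    · have : Prod.mk p ⁻¹' T = ∅ := by ext; simp [T, hp]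
      simp [this, hp]
  rw [hpre, (measurePreserving_piFinSuccAbove (fun _ => μ) i).measure_preimage
    hT.nullMeasurableSet, Measure.prod_apply hT, lintegral_congr hsection, lintegral_indicator hG]

lemma measure_forall_ne_mem_of_iIndepFun {Ω : Type*} [MeasurableSpace Ω] {P : Measure Ω}
    {Y : Fin (m + 1) → Ω → α} (hY : ∀ i, Measurable (Y i)) (hindep : iIndepFun Y P)
    {μ : Measure α} (hμ : ∀ i, P.map (Y i) = μ) (i : Fin (m + 1)) (hG : MeasurableSet G)
    (hS : MeasurableSet {z : α × α | z.2 ∈ S z.1}) :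
    P {ω | Y i ω ∈ G ∧ ∀ j ≠ i, Y j ω ∈ S (Y i ω)} = ∫⁻ p in G, μ (S p) ^ m ∂μ := by
  have := hindep.isProbabilityMeasure
  have : IsProbabilityMeasure μ := hμ i ▸ Measure.isProbabilityMeasure_map (hY i).aemeasurable
  rw [← measure_pi_setOf_forall_ne_mem μ i hG hS, ← funext hμ,
    ← hindep.map_fun_eq_pi_map fun j => (hY j).aemeasurable,
    Measure.map_apply (measurable_pi_lambda _ hY) (measurableSet_setOf_forall_ne_mem i hG hS)]
  rfl

lemma integral_ncard_setOf_mem [Fintype ι] {Ω : Type*} [MeasurableSpace Ω] {P : Measure Ω}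
    [IsFiniteMeasure P] {A : ι → Set Ω} (hA : ∀ i, MeasurableSet (A i)) :
    ∫ ω, ({i | ω ∈ A i}.ncard : ℝ) ∂P = ∑ i, P.real (A i) := by
  classical
  have hcount : ∀ ω, ({i | ω ∈ A i}.ncard : ℝ) = ∑ i, (A i).indicator 1 ω := by
    intro ω
    rw [ncard_eq_toFinset_card', toFinset_ofPred, Finset.card_filter]
    push_cast
    simp [indicator_apply]
  simp_rw [hcount]
  rw [integral_finsetSum _ fun i _ => (integrable_const 1).indicator (hA i)]
  simp [integral_indicator_one (hA _)]

end Scalarization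

open Scalarization in
theorem expected_scalarization_points_lower_bound_general
    {Ω : Type*} [MeasureSpace Ω]
    (Y : ℕ → Ω → ℝ × ℝ)
    (hY_meas : ∀ i, Measurable (Y i))
    (hY_indep : iIndepFun Y ℙ)
    (hY_unif : ∀ i, Measure.map (Y i) ℙ
        = volume.restrict (Set.Icc (0:ℝ) 1 ×ˢ Set.Icc (0:ℝ) 1)) :
    ∃ C > 0, ∀ n : ℕ, 2 ≤ n →
      (1/2) * Real.log n - C ≤
      ∫ ω, (({i : Fin n | ∃ α : ℝ × ℝ,
          0 ≤ α.1 ∧ 0 ≤ α.2 ∧ α ≠ 0 ∧ ∀ j : Fin n,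
            α.1 * (Y i ω).1 + α.2 * (Y i ω).2 ≤
              α.1 * (Y j ω).1 + α.2 * (Y j ω).2} : Set (Fin n)).ncard : ℝ) := by
  have := hY_indep.isProbabilityMeasure
  refine ⟨1, one_pos, fun n hn => ?_⟩
  obtain ⟨m, rfl⟩ : ∃ m, n = m + 1 := ⟨n - 1, by omega⟩
  let L : Fin (m + 1) → Set Ω := fun i =>
    {ω | IsLinearScalarizationMin (fun j : Fin (m + 1) => Y j ω) i}
  let E : Fin (m + 1) → Set Ω := fun i =>
    {ω | Y i ω ∈ Ioc (0 : ℝ) (1 / 2) ×ˢ Ioc (0 : ℝ) 1 ∧ ∀ j ≠ i, Y j ω ∈ tangentHalfPlane (Y i ω)}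
  have hL : ∀ i, MeasurableSet (L i) := fun i =>
    (isClosed_setOf_isLinearScalarizationMin i).measurableSet.preimage
      (measurable_pi_lambda _ fun j => hY_meas j)
  have hEL : ∀ i, E i ⊆ L i := fun i ω hω =>
    isLinearScalarizationMin_of_forall_ne_mem_tangentHalfPlane
      (x := fun j : Fin (m + 1) => Y j ω) hω.1.1.1 hω.1.2.1.le hω.2
  have hE : ∀ i, ENNReal.ofReal (log (m + 2) / (2 * (m + 1))) ≤ ℙ (E i) := fun i => by
    rw [measure_forall_ne_mem_of_iIndepFun (fun j => hY_meas j)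
      (hY_indep.precomp Fin.val_injective) (fun j => hY_unif j) i
      (measurableSet_Ioc.prod measurableSet_Ioc) measurableSet_setOf_mem_tangentHalfPlane]
    exact ofReal_log_div_le_lintegral_tangentHalfPlane_pow m
  calc (1 / 2) * log ((m + 1 : ℕ) : ℝ) - 1
      ≤ ∑ _i : Fin (m + 1), log (m + 2) / (2 * (m + 1)) := by
        have hlog : log (m + 1) ≤ log (m + 2) := log_le_log (by positivity) (by linarith)
        have hsum : ∑ _i : Fin (m + 1), log (m + 2) / (2 * (m + 1)) = log (m + 2) / 2 := by
          rw [Finset.sum_const, Finset.card_univ, Fintype.card_fin, nsmul_eq_mul]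
          push_cast
          field_simp
        rw [hsum]
        push_cast
        linarith
    _ ≤ ∑ i, (ℙ : Measure Ω).real (E i) := Finset.sum_le_sum fun i _ =>
        (ENNReal.ofReal_le_iff_le_toReal (measure_ne_top _ _)).1 (hE i)
    _ ≤ ∑ i, (ℙ : Measure Ω).real (L i) := Finset.sum_le_sum fun i _ => measureReal_mono (hEL i)
    _ = _ := (integral_ncard_setOf_mem hL).symm

/-- Lower bound on the expected number of points, among `n` i.i.d. uniform
samples on the unit square, that minimize some nonzero nonnegative linear
functional: `E|𝓛| ≥ (1/2) ln n − C`. -/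
theorem expected_scalarization_points_lower_bound
    {Ω : Type*} [MeasureSpace Ω] [IsProbabilityMeasure (ℙ : Measure Ω)]
    (Y : ℕ → Ω → ℝ × ℝ)
    (hY_meas : ∀ i, Measurable (Y i))
    (hY_indep : iIndepFun Y ℙ)
    (hY_unif : ∀ i, Measure.map (Y i) ℙ
        = volume.restrict (Set.Icc (0:ℝ) 1 ×ˢ Set.Icc (0:ℝ) 1)) :
    ∃ C > 0, ∀ n : ℕ, 2 ≤ n →
      (1/2) * Real.log n - C ≤
      ∫ ω, (({i : Fin n | ∃ α : ℝ × ℝ,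
          0 ≤ α.1 ∧ 0 ≤ α.2 ∧ α ≠ 0 ∧ ∀ j : Fin n,
            α.1 * (Y i ω).1 + α.2 * (Y i ω).2 ≤
              α.1 * (Y j ω).1 + α.2 * (Y j ω).2} : Set (Fin n)).ncard : ℝ) :=
  expected_scalarization_points_lower_bound_general Y hY_meas hY_indep hY_unif
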